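/- If R is a direct summand (as an R-module, via a splitting σ with σ(1)=1) of a k-algebra S, and S is D-simple (i.e., S is a simple module over its ring of k-linear differential operators), then R is D-simple. -/

import Mathlib

/-!
If `δ` is a differential operator on `S`, then `σ ∘ δ ∘ φ` is one on `R` of the same order:
since `σ` is `R`-linear, commuting a multiplication by `r` past it turns the commutator with
`r` on `R` into the commutator with `φ r` on `S`. Given `r ≠ 0`, an operator on `S` sending
`φ r` to `1` thus yields one on `R` sending `r` to `σ 1 = 1`.
-/

/-- `IsDiffOp k A m δ` : the `k`-linear endomorphism `δ` of `A` is a `k`-linear differential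
operator of order `≤ m`, defined inductively. -/
def IsDiffOp (k : Type*) (A : Type*) [CommSemiring k] [CommRing A] [Algebra k A] :
    ℕ → (A →ₗ[k] A) → Prop
  | 0, δ => ∃ a : A, ∀ x : A, δ x = a * x
  | m + 1, δ => ∀ r : A,
      IsDiffOp k A m (δ ∘ₗ LinearMap.mulLeft k r - LinearMap.mulLeft k r ∘ₗ δ)

/-- A `k`-algebra `A` is `D`-simple if every nonzero element of `A` can be sent to `1` by
some `k`-linear differential operator; equivalently `A` is a simple module over its ring of
differential operators. -/
def DSimple (k : Type*) (A : Type*) [CommSemiring k] [CommRing A] [Algebra k A] : Prop :=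
  ∀ a : A, a ≠ 0 → ∃ (m : ℕ) (δ : A →ₗ[k] A), IsDiffOp k A m δ ∧ δ a = 1

section Sandwich

variable {k R S : Type*} [CommSemiring k] [CommRing R] [CommRing S] [Algebra k R] [Algebra k S]
  {φ : R →ₐ[k] S} {σ : S →ₗ[k] R}

theorem sandwich_commutator_mulLeft (hσ : ∀ (r : R) (s : S), σ (φ r * s) = r * σ s)
    (δ : S →ₗ[k] S) (r : R) :
    (σ ∘ₗ δ ∘ₗ φ.toLinearMap) ∘ₗ LinearMap.mulLeft k r -
        LinearMap.mulLeft k r ∘ₗ (σ ∘ₗ δ ∘ₗ φ.toLinearMap) =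
      σ ∘ₗ (δ ∘ₗ LinearMap.mulLeft k (φ r) - LinearMap.mulLeft k (φ r) ∘ₗ δ) ∘ₗ
        φ.toLinearMap := by
  ext x
  simp only [LinearMap.sub_apply, LinearMap.comp_apply, LinearMap.mulLeft_apply,
    AlgHom.toLinearMap_apply, map_sub, map_mul, hσ]

theorem IsDiffOp.sandwich (hσ : ∀ (r : R) (s : S), σ (φ r * s) = r * σ s) :
    ∀ {m : ℕ} {δ : S →ₗ[k] S}, IsDiffOp k S m δ →
      IsDiffOp k R m (σ ∘ₗ δ ∘ₗ φ.toLinearMap)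
  | 0, δ, ⟨a, ha⟩ => ⟨σ a, fun x => by
      rw [LinearMap.comp_apply, LinearMap.comp_apply, AlgHom.toLinearMap_apply, ha, mul_comm,
        hσ, mul_comm]⟩
  | _ + 1, _, hδ => fun r => by
      rw [sandwich_commutator_mulLeft hσ]
      exact IsDiffOp.sandwich hσ (hδ (φ r))

end Sandwich

/-- If `R` is a direct summand of a `k`-algebra `S` (via an `R`-linear splitting `σ` with
`σ 1 = 1`), and `S` is `D`-simple, then `R` is `D`-simple. -/
theorem dsimple_of_summand
    (k R S : Type*) [CommSemiring k] [CommRing R] [CommRing S]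
    [Algebra k R] [Algebra k S]
    (φ : R →ₐ[k] S) (hφ : Function.Injective φ)
    (σ : S →ₗ[k] R) (hσlin : ∀ (r : R) (s : S), σ (φ r * s) = r * σ s) (hσ1 : σ 1 = 1)
    (hS : DSimple k S) :
    DSimple k R := by
  intro r hr
  have hφr : φ r ≠ 0 := (map_ne_zero_iff φ hφ).mpr hr
  obtain ⟨m, δ, hδ, hδr⟩ := hS (φ r) hφr
  refine ⟨m, σ ∘ₗ δ ∘ₗ φ.toLinearMap, hδ.sandwich hσlin, ?_⟩
  simp only [LinearMap.comp_apply, AlgHom.toLinearMap_apply, hδr, hσ1]
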